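/- Every graph of clique-width at most k has NLC-width at most k. -/

import Mathlib

open SimpleGraph

/-- Edge insertion `η_{a,b}`: add all edges between vertices labeled `a` and `b`. -/
def etaG {V : Type} {k : ℕ} (G : SimpleGraph V) (lab : V → Fin k) (a b : Fin k) :
    SimpleGraph V where
  Adj x y := G.Adj x y ∨ (x ≠ y ∧ ((lab x = a ∧ lab y = b) ∨ (lab x = b ∧ lab y = a)))
  symm := by
    constructor
    intro x y h
    rcases h with h | ⟨hxy, h⟩
    · exact Or.inl h.symm
    · rcases h with ⟨h1,h2⟩|⟨h1,h2⟩
      · exact Or.inr ⟨hxy.symm, Or.inr ⟨h2,h1⟩⟩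
      · exact Or.inr ⟨hxy.symm, Or.inl ⟨h2,h1⟩⟩
  loopless := by
    constructor
    intro x h
    rcases h with h | ⟨hxx, _⟩
    · exact G.loopless.irrefl x h
    · exact hxx rfl

/-- NLC-width union operation `×_S`. -/
def nlcJoin {V W : Type} {k : ℕ} (G : SimpleGraph V) (H : SimpleGraph W)
    (labG : V → Fin k) (labH : W → Fin k) (S : Set (Fin k × Fin k)) :
    SimpleGraph (V ⊕ W) where
  Adj x y := match x, y with
    | .inl a, .inl b => G.Adj a b
    | .inr a, .inr b => H.Adj a b
    | .inl a, .inr b => (labG a, labH b) ∈ S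
    | .inr a, .inl b => (labG b, labH a) ∈ S
  symm := by
    constructor
    rintro (a | a) (b | b) h
    · exact G.symm.symm _ _ h
    · exact h
    · exact h
    · exact H.symm.symm _ _ h
  loopless := by
    constructor
    rintro (a | a) h
    · exact G.loopless.irrefl a h
    · exact H.loopless.irrefl a h

/-- Labeled graphs constructible by clique-width operations with labels in `Fin k`. -/
inductive CWBuild (k : ℕ) : {V : Type} → SimpleGraph V → (V → Fin k) → Prop
  | single (a : Fin k) : CWBuild k (⊥ : SimpleGraph PUnit) (fun _ => a)
  | union {V W : Type} {G : SimpleGraph V} {H : SimpleGraph W}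
      {labG : V → Fin k} {labH : W → Fin k} :
      CWBuild k G labG → CWBuild k H labH →
      CWBuild k (G ⊕g H) (Sum.elim labG labH)
  | insertEdges {V : Type} {G : SimpleGraph V} {lab : V → Fin k} (a b : Fin k)
      (hab : a ≠ b) : CWBuild k G lab → CWBuild k (etaG G lab a b) lab
  | relabel {V : Type} {G : SimpleGraph V} {lab : V → Fin k} (a b : Fin k) :
      CWBuild k G lab → CWBuild k G (fun v => if lab v = a then b else lab v)

/-- `G` is definable by a clique-width `k`-expression. -/
def HasCW (k : ℕ) {V : Type} (G : SimpleGraph V) : Prop :=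
  ∃ (W : Type) (H : SimpleGraph W) (lab : W → Fin k),
    CWBuild k H lab ∧ Nonempty (G ≃g H)

/-- The clique-width of `G`. -/
noncomputable def cliquewidth {V : Type} (G : SimpleGraph V) : ℕ :=
  sInf {k | HasCW k G}

/-- Labeled graphs constructible by NLC-width operations with labels in `Fin k`. -/
inductive NLCBuild (k : ℕ) : {V : Type} → SimpleGraph V → (V → Fin k) → Prop
  | single (a : Fin k) : NLCBuild k (⊥ : SimpleGraph PUnit) (fun _ => a)
  | join {V W : Type} {G : SimpleGraph V} {H : SimpleGraph W}
      {labG : V → Fin k} {labH : W → Fin k} (S : Set (Fin k × Fin k)) :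
      NLCBuild k G labG → NLCBuild k H labH →
      NLCBuild k (nlcJoin G H labG labH S) (Sum.elim labG labH)
  | relabel {V : Type} {G : SimpleGraph V} {lab : V → Fin k} (R : Fin k → Fin k) :
      NLCBuild k G lab → NLCBuild k G (R ∘ lab)

/-- `G` is definable by an NLC-width `k`-expression. -/
def HasNLC (k : ℕ) {V : Type} (G : SimpleGraph V) : Prop :=
  ∃ (W : Type) (H : SimpleGraph W) (lab : W → Fin k),
    NLCBuild k H lab ∧ Nonempty (G ≃g H)

/-- The NLC-width of `G`. -/
noncomputable def nlcwidth {V : Type} (G : SimpleGraph V) : ℕ :=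
  sInf {k | HasNLC k G}

/-!
Clique-width operations are NLC operations in disguise: `⊕` is `×_∅` and `ρ_{a→b}` is a
relabelling `∘_R`. An edge insertion `η_{a,b}`, more generally one along any set `P` of label
pairs, can be pushed through an NLC-expression down to its leaves: it is absorbed into the set `S`
of every join and pulled back along every relabelling.

The remaining point is the junk value `sInf ∅ = 0`. A graph on `n ≥ 1` vertices has clique-width
at most `n` (give each vertex its own label, then create each edge `uv` by `η_{lab u, lab v}`),
so the clique-width is attained; the graph on no vertices has no expression of either kind.
-/

section NLC

variable {k : ℕ}

theorem sum_eq_nlcJoin_empty {V W : Type} (G : SimpleGraph V) (H : SimpleGraph W)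
    (labG : V → Fin k) (labH : W → Fin k) : G ⊕g H = nlcJoin G H labG labH ∅ := by
  ext (x | x) (y | y) <;> simp [nlcJoin]

theorem etaG_eq_sup_fromRel {V : Type} (G : SimpleGraph V) (lab : V → Fin k) (a b : Fin k) :
    etaG G lab a b = G ⊔ fromRel fun x y => (lab x, lab y) ∈ ({(a, b)} : Set (Fin k × Fin k)) := by
  ext x y
  simp only [etaG, sup_adj, fromRel_adj, Set.mem_singleton_iff, Prod.mk.injEq]
  tauto

theorem NLCBuild.sup_fromRel {V : Type} {G : SimpleGraph V} {lab : V → Fin k}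
    (h : NLCBuild k G lab) (P : Set (Fin k × Fin k)) :
    NLCBuild k (G ⊔ fromRel fun x y => (lab x, lab y) ∈ P) lab := by
  induction h generalizing P with
  | single a =>
    rw [Subsingleton.elim (⊥ ⊔ _) ⊥]
    exact .single a
  | @join V W G H labG labH S _ _ ihG ihH =>
    convert NLCBuild.join (S ∪ {p | p ∈ P ∨ p.swap ∈ P}) (ihG P) (ihH P) using 1
    ext (x | x) (y | y) <;> simp [nlcJoin]
    tauto
  | @relabel V G lab R _ ih =>
    exact .relabel R (ih (Prod.map R R ⁻¹' P))

theorem NLCBuild.of_cwBuild {V : Type} {G : SimpleGraph V} {lab : V → Fin k}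
    (h : CWBuild k G lab) : NLCBuild k G lab := by
  induction h with
  | single a => exact .single a
  | @union V W G H labG labH _ _ ihG ihH =>
    rw [sum_eq_nlcJoin_empty G H labG labH]
    exact .join ∅ ihG ihH
  | insertEdges a b _ _ ih =>
    rw [etaG_eq_sup_fromRel]
    exact ih.sup_fromRel _
  | relabel a b _ ih => exact .relabel (fun c => if c = a then b else c) ih

theorem HasCW.hasNLC {V : Type} {G : SimpleGraph V} (h : HasCW k G) : HasNLC k G :=
  let ⟨W, H, lab, hb, e⟩ := h
  ⟨W, H, lab, .of_cwBuild hb, e⟩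

theorem NLCBuild.nonempty {V : Type} {G : SimpleGraph V} {lab : V → Fin k}
    (h : NLCBuild k G lab) : Nonempty V := by
  induction h with
  | single => exact ⟨PUnit.unit⟩
  | join _ _ _ ihG _ => exact ⟨.inl ihG.some⟩
  | relabel _ _ ih => exact ih

theorem HasNLC.nonempty {V : Type} {G : SimpleGraph V} (h : HasNLC k G) : Nonempty V :=
  let ⟨_, _, _, hb, ⟨e⟩⟩ := h
  hb.nonempty.map e.symm

end NLC

def CWDefinable (k : ℕ) {V : Type} (G : SimpleGraph V) (lab : V → Fin k) : Prop :=
  ∃ (W : Type) (H : SimpleGraph W) (labH : W → Fin k) (e : G ≃g H),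
    CWBuild k H labH ∧ ∀ v, labH (e v) = lab v

section CW

variable {k : ℕ}

theorem CWDefinable.hasCW {V : Type} {G : SimpleGraph V} {lab : V → Fin k}
    (h : CWDefinable k G lab) : HasCW k G :=
  let ⟨W, H, labH, e, hb, _⟩ := h
  ⟨W, H, labH, hb, ⟨e⟩⟩

theorem CWDefinable.of_iso {V V' : Type} {G : SimpleGraph V} {G' : SimpleGraph V'}
    {lab : V → Fin k} {lab' : V' → Fin k} (e : G ≃g G') (hlab : ∀ v, lab' (e v) = lab v)
    (h : CWDefinable k G' lab') : CWDefinable k G lab :=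
  let ⟨W, H, labH, e', hb, hlab'⟩ := h
  ⟨W, H, labH, e.trans e', hb, fun v => (hlab' (e v)).trans (hlab v)⟩

theorem CWDefinable.sum {V W : Type} {G : SimpleGraph V} {H : SimpleGraph W}
    {labG : V → Fin k} {labH : W → Fin k} (hG : CWDefinable k G labG)
    (hH : CWDefinable k H labH) : CWDefinable k (G ⊕g H) (Sum.elim labG labH) :=
  let ⟨_, G', labG', eG, hbG, hlabG⟩ := hG
  let ⟨_, H', labH', eH, hbH, hlabH⟩ := hH
  ⟨_, _, _, eG.sumCongr eH, hbG.union hbH, by rintro (v | w) <;> simp [hlabG, hlabH]⟩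

theorem CWDefinable.insertEdges {V : Type} {G : SimpleGraph V} {lab : V → Fin k} {a b : Fin k}
    (hab : a ≠ b) (h : CWDefinable k G lab) : CWDefinable k (etaG G lab a b) lab := by
  obtain ⟨W, H, labH, e, hb, hlab⟩ := h
  refine ⟨W, etaG H labH a b, labH, ⟨e.toEquiv, ?_⟩, hb.insertEdges a b hab, hlab⟩
  intro x y
  change (etaG H labH a b).Adj (e x) (e y) ↔ _
  simp only [etaG, hlab, e.map_adj_iff, e.injective.ne_iff]

theorem cwDefinable_of_unique {V : Type} [Unique V] (G : SimpleGraph V) (lab : V → Fin k) :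
    CWDefinable k G lab := by
  refine ⟨PUnit, ⊥, fun _ => lab default, ⟨Equiv.ofUnique V PUnit, ?_⟩, .single _, ?_⟩
  · intro x y
    simp [Subsingleton.elim x y]
  · intro v
    rw [Unique.eq_default v]

theorem cwDefinable_bot {V : Type} [Finite V] :
    ∀ [Nonempty V] (lab : V → Fin k), CWDefinable k (⊥ : SimpleGraph V) lab := by
  induction V using Finite.induction_empty_option with
  | of_equiv e ih =>
    intro _ lab
    have := e.nonempty
    exact .of_iso ⟨e.symm, by simp⟩ (fun v => by simp) (ih (lab ∘ e))
  | h_empty => intro h; exact isEmptyElim h.some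
  | @h_option α _ ih =>
    intro _ lab
    rcases isEmpty_or_nonempty α with hα | hα
    · exact cwDefinable_of_unique _ lab
    · refine .of_iso ⟨Equiv.optionEquivSumPUnit α, by rintro (_ | _) (_ | _) <;> simp⟩ ?_
        ((ih (lab ∘ some)).sum (cwDefinable_of_unique ⊥ fun _ => lab none))
      rintro (_ | v) <;> rfl

theorem etaG_eq_sup_edge {V : Type} (G : SimpleGraph V) {lab : V → Fin k}
    (hlab : Function.Injective lab) (u v : V) : etaG G lab (lab u) (lab v) = G ⊔ edge u v := by
  ext x y
  simp only [etaG, sup_adj, edge_adj, hlab.eq_iff]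
  tauto

theorem CWDefinable.sup_edge {V : Type} {G : SimpleGraph V} {lab : V → Fin k}
    (hlab : Function.Injective lab) (h : CWDefinable k G lab) (u v : V) :
    CWDefinable k (G ⊔ edge u v) lab := by
  rcases eq_or_ne u v with rfl | huv
  · rwa [sup_edge_self]
  · rw [← etaG_eq_sup_edge G hlab]
    exact h.insertEdges (hlab.ne huv)

theorem cwDefinable_of_injective {V : Type} [Finite V] [Nonempty V] (G : SimpleGraph V)
    {lab : V → Fin k} (hlab : Function.Injective lab) : CWDefinable k G lab := by
  rw [← fromEdgeSet_edgeSet G]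
  induction G.edgeSet, Set.toFinite G.edgeSet using Set.Finite.induction_on with
  | empty => rw [fromEdgeSet_empty]; exact cwDefinable_bot lab
  | @insert e s _ _ ih =>
    induction e with
    | h u v =>
      rw [← Set.union_singleton, fromEdgeSet_union]
      exact ih.sup_edge hlab u v

end CW

theorem hasCW_card {V : Type} [Fintype V] [Nonempty V] (G : SimpleGraph V) :
    HasCW (Fintype.card V) G :=
  (cwDefinable_of_injective G (Fintype.equivFin V).injective).hasCW

theorem nlcwidth_le_cliquewidth {V : Type} [Finite V] (G : SimpleGraph V) :
    nlcwidth G ≤ cliquewidth G := by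
  cases nonempty_fintype V
  rcases isEmpty_or_nonempty V with hV | hV
  · have : {k | HasNLC k G} = ∅ := Set.eq_empty_of_forall_notMem fun k hk =>
      (HasNLC.nonempty hk).elim isEmptyElim
    simp [nlcwidth, this]
  · have hcw : HasCW (cliquewidth G) G := Nat.sInf_mem (s := {m | HasCW m G}) ⟨_, hasCW_card G⟩
    exact Nat.sInf_le hcw.hasNLC

/-- Every graph of clique-width at most `k` has NLC-width at most `k`. -/
theorem nlcwidth_le_of_cliquewidth_le {V : Type} [Fintype V] (G : SimpleGraph V)
    (k : ℕ) (h : cliquewidth G ≤ k) : nlcwidth G ≤ k :=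
  (nlcwidth_le_cliquewidth G).trans h
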